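/- For ±1-walks of length n starting at 0 ending at n mod 2, the number of walks whose minimal partial sum is exactly −d (for 0 ≤ d ≤ ⌊n/2⌋) equals C(n, ⌈n/2⌉+d) − C(n, ⌈n/2⌉+d+1), the same as the number of nonnegative walks of length n ending at 2d + (n mod 2). -/

import Mathlib

/-!
Let `B(n, c, e)` be the set of walks of length `n` ending at `e` whose partial sums stay `≥ -c`.
Splitting off the last step gives `#B(n+1, c, e) = #B(n, c, e-1) + #B(n, c, e+1)` for `e ≥ -c`,
the Pascal recurrence in the number `u` of up-steps, so induction on `n` gives
`#B(n, c, 2u - n) = C(n, u) - C(n, u+c+1)` as long as `2u - n ≥ -c - 1`; at `2u - n = -c - 1`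
both sides vanish, the right one by the symmetry of binomial coefficients.
The walks of depth exactly `d + 1` form `B(n, d+1, e) \ B(n, d, e)`, so with `e = n % 2` the
first count telescopes to `C(n, ⌈n/2⌉+d) - C(n, ⌈n/2⌉+d+1)`, which is also `#B(n, 0, 2d + n % 2)`.
-/

def psum {n : ℕ} (w : Fin n → ℤ) (k : ℕ) : ℤ :=
  ∑ i ∈ Finset.univ.filter (fun i : Fin n => (i : ℕ) < k), w i

open Finset

lemma psum_snoc {n : ℕ} (v : Fin n → ℤ) (x : ℤ) (k : ℕ) :
    psum (Fin.snoc v x : Fin (n + 1) → ℤ) k = psum v k + if n < k then x else 0 := by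
  simp [psum, sum_filter, Fin.sum_univ_castSucc]

lemma psum_of_le {n : ℕ} (w : Fin n → ℤ) {k : ℕ} (h : n ≤ k) : psum w k = psum w n := by
  unfold psum
  congr 1
  ext i
  simp only [mem_filter, mem_univ, true_and]
  omega

def walks (n : ℕ) : Finset (Fin n → ℤ) := Fintype.piFinset fun _ => {1, -1}

lemma mem_walks {n : ℕ} {w : Fin n → ℤ} : w ∈ walks n ↔ ∀ i, w i = 1 ∨ w i = -1 := by
  simp [walks]

lemma neg_length_le_psum {n : ℕ} {w : Fin n → ℤ} (hw : w ∈ walks n) : -(n : ℤ) ≤ psum w n := by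
  have : ∀ i, -1 ≤ w i := fun i => by rcases mem_walks.1 hw i with h | h <;> simp [h]
  simpa [psum] using sum_le_sum fun i (_ : i ∈ univ) => this i

lemma card_filter_walks_succ {n : ℕ} (P : (Fin (n + 1) → ℤ) → Prop) [DecidablePred P] :
    #{w ∈ walks (n + 1) | P w} =
      #{v ∈ walks n | P (Fin.snoc v 1)} + #{v ∈ walks n | P (Fin.snoc v (-1))} := by
  calc #{w ∈ walks (n + 1) | P w}
      = #{p ∈ ({1, -1} : Finset ℤ) ×ˢ walks n | P (Fin.snoc p.2 p.1)} := by
        refine card_equiv (Fin.snocEquiv fun _ => ℤ).symm fun w => ?_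
        simp [mem_walks, Fin.forall_fin_succ', Fin.init, and_comm]
    _ = ∑ x ∈ ({1, -1} : Finset ℤ), #{v ∈ walks n | P (Fin.snoc v x)} := by
        simp only [card_filter, sum_product]
    _ = _ := sum_pair (by norm_num)

def boundedWalks (n c : ℕ) (e : ℤ) : Finset (Fin n → ℤ) :=
  {w ∈ walks n | psum w n = e ∧ ∀ k ≤ n, -(c : ℤ) ≤ psum w k}

lemma mem_boundedWalks {n c : ℕ} {e : ℤ} {w : Fin n → ℤ} :
    w ∈ boundedWalks n c e ↔ w ∈ walks n ∧ psum w n = e ∧ ∀ k ≤ n, -(c : ℤ) ≤ psum w k :=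
  mem_filter

lemma boundedWalks_mono {n c c' : ℕ} {e : ℤ} (h : c ≤ c') :
    boundedWalks n c e ⊆ boundedWalks n c' e := fun w hw => by
  rw [mem_boundedWalks] at hw ⊢
  exact ⟨hw.1, hw.2.1, fun k hk => le_trans (by omega) (hw.2.2 k hk)⟩

lemma boundedWalks_eq_empty_of_lt_neg_bound {n c : ℕ} {e : ℤ} (h : e < -c) :
    boundedWalks n c e = ∅ :=
  filter_eq_empty_iff.2 fun _ _ ⟨hend, hbound⟩ => (hbound n le_rfl).not_gt (hend ▸ h)

lemma boundedWalks_eq_empty_of_lt_neg_length {n c : ℕ} {e : ℤ} (h : e < -n) :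
    boundedWalks n c e = ∅ :=
  filter_eq_empty_iff.2 fun _ hw ⟨hend, _⟩ => (neg_length_le_psum hw).not_gt (hend ▸ h)

lemma snoc_bounded_iff {n c : ℕ} {e : ℤ} (v : Fin n → ℤ) (x : ℤ) (h : -(c : ℤ) ≤ e) :
    (psum (Fin.snoc v x : Fin (n + 1) → ℤ) (n + 1) = e ∧
        ∀ k ≤ n + 1, -(c : ℤ) ≤ psum (Fin.snoc v x : Fin (n + 1) → ℤ) k) ↔
      psum v n = e - x ∧ ∀ k ≤ n, -(c : ℤ) ≤ psum v k := by
  simp only [psum_snoc, lt_add_one, if_true, psum_of_le v n.le_succ]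
  constructor
  · rintro ⟨hend, hbound⟩
    refine ⟨by linarith, fun k hk => ?_⟩
    simpa [not_lt.2 hk] using hbound k (by omega)
  · rintro ⟨hend, hbound⟩
    refine ⟨by linarith, fun k hk => ?_⟩
    rcases (Nat.le_succ_iff.1 hk) with hk | rfl
    · simpa [not_lt.2 hk] using hbound k hk
    · rw [if_pos n.lt_succ_self, psum_of_le v n.le_succ]
      linarith

lemma card_boundedWalks_succ {n c : ℕ} {e : ℤ} (h : -(c : ℤ) ≤ e) :
    #(boundedWalks (n + 1) c e) = #(boundedWalks n c (e - 1)) + #(boundedWalks n c (e + 1)) := by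
  rw [boundedWalks, card_filter_walks_succ, boundedWalks, boundedWalks, ← sub_neg_eq_add]
  simp only [snoc_bounded_iff _ _ h]

lemma card_boundedWalks_zero (c : ℕ) (e : ℤ) :
    #(boundedWalks 0 c e) = if e = 0 then 1 else 0 := by
  split_ifs with he
  · simp [boundedWalks, walks, psum, he]
  · simp [boundedWalks, psum, Ne.symm he]

theorem card_boundedWalks (n c u : ℕ) (h : n ≤ 2 * u + c + 1) :
    (#(boundedWalks n c (2 * u - n)) : ℤ) = n.choose u - n.choose (u + c + 1) := by
  induction n generalizing u with
  | zero =>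
    rcases u with _ | u
    · simp [card_boundedWalks_zero]
    · simp [card_boundedWalks_zero, Nat.choose_eq_zero_of_lt]
      omega
  | succ n ih =>
    rcases lt_or_ge (2 * (u : ℤ) - (n + 1 : ℕ)) (-c) with hlt | hge
    · rw [boundedWalks_eq_empty_of_lt_neg_bound hlt, card_empty,
        Nat.choose_symm_of_eq_add (by omega : n + 1 = u + (u + c + 1))]
      simp
    rw [card_boundedWalks_succ hge, Nat.cast_add]
    rcases u with _ | u
    · have hcn : n < c := by omega
      have hdown : 2 * ((0 : ℕ) : ℤ) - (n + 1 : ℕ) + 1 = 2 * (0 : ℕ) - n := by push_cast; ring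
      rw [boundedWalks_eq_empty_of_lt_neg_length (by omega), hdown, ih 0 (by omega),
        Nat.choose_succ_succ', zero_add, Nat.choose_eq_zero_of_lt hcn]
      simp
    · have hup : 2 * ((u + 1 : ℕ) : ℤ) - (n + 1 : ℕ) - 1 = 2 * u - n := by push_cast; ring
      have hdown : 2 * ((u + 1 : ℕ) : ℤ) - (n + 1 : ℕ) + 1 = 2 * (u + 1 : ℕ) - n := by
        push_cast; ring
      rw [hup, hdown, ih u (by omega), ih (u + 1) (by omega), Nat.choose_succ_succ',
        show u + 1 + c + 1 = u + c + 1 + 1 by ring, Nat.choose_succ_succ' n (u + c + 1)]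
      push_cast
      ring

lemma setOf_walks_nonneg_eq (n : ℕ) (e : ℤ) :
    {w : Fin n → ℤ | (∀ i, w i = 1 ∨ w i = -1) ∧ (∀ k, 0 ≤ psum w k) ∧ psum w n = e} =
      boundedWalks n 0 e := by
  ext w
  simp only [Set.mem_ofPred_eq, mem_coe, mem_boundedWalks, mem_walks, Nat.cast_zero, neg_zero]
  refine ⟨fun ⟨hw, hbound, hend⟩ => ⟨hw, hend, fun k _ => hbound k⟩,
    fun ⟨hw, hend, hbound⟩ => ⟨hw, fun k => ?_, hend⟩⟩
  rcases le_total k n with hk | hk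
  · exact hbound k hk
  · exact psum_of_le w hk ▸ hbound n le_rfl

lemma setOf_walks_depth_zero_eq (n : ℕ) (e : ℤ) :
    {w : Fin n → ℤ | (∀ i, w i = 1 ∨ w i = -1) ∧ psum w n = e ∧
        (∀ k ≤ n, -((0 : ℕ) : ℤ) ≤ psum w k) ∧ ∃ k ≤ n, psum w k = -((0 : ℕ) : ℤ)} =
      boundedWalks n 0 e := by
  ext w
  simp only [Set.mem_ofPred_eq, mem_coe, mem_boundedWalks, mem_walks]
  exact ⟨fun ⟨hw, hend, hbound, _⟩ => ⟨hw, hend, hbound⟩,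
    fun ⟨hw, hend, hbound⟩ => ⟨hw, hend, hbound, 0, n.zero_le, by simp [psum]⟩⟩

lemma setOf_walks_depth_succ_eq (n c : ℕ) (e : ℤ) :
    {w : Fin n → ℤ | (∀ i, w i = 1 ∨ w i = -1) ∧ psum w n = e ∧
        (∀ k ≤ n, -((c + 1 : ℕ) : ℤ) ≤ psum w k) ∧ ∃ k ≤ n, psum w k = -((c + 1 : ℕ) : ℤ)} =
      ↑(boundedWalks n (c + 1) e \ boundedWalks n c e) := by
  ext w
  simp only [Set.mem_ofPred_eq, coe_sdiff, Set.mem_sdiff, mem_coe, mem_boundedWalks, mem_walks]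
  constructor
  · rintro ⟨hw, hend, hbound, k, hk, hmin⟩
    refine ⟨⟨hw, hend, hbound⟩, fun ⟨_, _, hbound'⟩ => ?_⟩
    have := hbound' k hk
    omega
  · rintro ⟨⟨hw, hend, hbound⟩, hnot⟩
    refine ⟨hw, hend, hbound, ?_⟩
    by_contra! hne
    exact hnot ⟨hw, hend, fun k hk => by have := hbound k hk; have := hne k hk; omega⟩

lemma ncard_walks_depth (n d u : ℕ) (h : n ≤ 2 * u + 1) :
    ({w : Fin n → ℤ | (∀ i, w i = 1 ∨ w i = -1) ∧ psum w n = 2 * u - n ∧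
        (∀ k ≤ n, -(d : ℤ) ≤ psum w k) ∧ ∃ k ≤ n, psum w k = -(d : ℤ)}.ncard : ℤ) =
      n.choose (u + d) - n.choose (u + d + 1) := by
  rcases d with _ | c
  · rw [setOf_walks_depth_zero_eq, Set.ncard_coe_finset, card_boundedWalks n 0 u (by omega)]
    simp
  · rw [setOf_walks_depth_succ_eq, Set.ncard_coe_finset,
      card_sdiff_of_subset (boundedWalks_mono c.le_succ), Nat.cast_sub (card_le_card
        (boundedWalks_mono c.le_succ)), card_boundedWalks n (c + 1) u (by omega),
      card_boundedWalks n c u (by omega)]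
    ring_nf

theorem stmt19_general (n d : ℕ) :
    {w : Fin n → ℤ |
        (∀ i, w i = 1 ∨ w i = -1) ∧
          psum w n = (n % 2 : ℤ) ∧
          (∀ k ≤ n, -(d : ℤ) ≤ psum w k) ∧
          (∃ k ≤ n, psum w k = -(d : ℤ))}.ncard
      = Nat.choose n ((n + 1) / 2 + d) - Nat.choose n ((n + 1) / 2 + d + 1)
    ∧ {w : Fin n → ℤ |
        (∀ i, w i = 1 ∨ w i = -1) ∧
          psum w n = (n % 2 : ℤ) ∧
          (∀ k ≤ n, -(d : ℤ) ≤ psum w k) ∧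
          (∃ k ≤ n, psum w k = -(d : ℤ))}.ncard
      = {w : Fin n → ℤ |
          (∀ i, w i = 1 ∨ w i = -1) ∧
            (∀ k, 0 ≤ psum w k) ∧
            psum w n = 2 * (d : ℤ) + (n % 2 : ℤ)}.ncard := by
  have hend : (n % 2 : ℤ) = 2 * ((n + 1) / 2 : ℕ) - n := by omega
  have hend' : 2 * (d : ℤ) + (n % 2 : ℤ) = 2 * ((n + 1) / 2 + d : ℕ) - n := by push_cast; omega
  have hmin := ncard_walks_depth n d ((n + 1) / 2) (by omega)
  have hnonneg := card_boundedWalks n 0 ((n + 1) / 2 + d) (by omega)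
  rw [add_zero, ← Set.ncard_coe_finset, ← setOf_walks_nonneg_eq] at hnonneg
  rw [hend', hend]
  constructor <;> omega

theorem stmt19 (n d : ℕ) (hd : d ≤ n / 2) :
    {w : Fin n → ℤ |
        (∀ i, w i = 1 ∨ w i = -1) ∧
          psum w n = (n % 2 : ℤ) ∧
          (∀ k ≤ n, -(d : ℤ) ≤ psum w k) ∧
          (∃ k ≤ n, psum w k = -(d : ℤ))}.ncard
      = Nat.choose n ((n + 1) / 2 + d) - Nat.choose n ((n + 1) / 2 + d + 1)
    ∧ {w : Fin n → ℤ |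
        (∀ i, w i = 1 ∨ w i = -1) ∧
          psum w n = (n % 2 : ℤ) ∧
          (∀ k ≤ n, -(d : ℤ) ≤ psum w k) ∧
          (∃ k ≤ n, psum w k = -(d : ℤ))}.ncard
      = {w : Fin n → ℤ |
          (∀ i, w i = 1 ∨ w i = -1) ∧
            (∀ k, 0 ≤ psum w k) ∧
            psum w n = 2 * (d : ℤ) + (n % 2 : ℤ)}.ncard :=
  stmt19_general n d
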